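/- arXiv:1608.01908 — 7 statements merged into one kernel-verified Lean document; each statement's English description precedes it below -/
import Mathlib

section
/- Let x=(x₀,x₁), y=(y₀,y₁), z=(z₀,z₁) be vectors in ℂ², and write x₊=(x₀,x₁), x₋=(x₀,−x₁), and similarly y₊,y₋,z₊,z₋. Put ξ = x⊗y⊗z, ξ₀ = x₊⊗y₊⊗z₊, ξ₁ = x₊⊗y₋⊗z₋, ξ₂ = x₋⊗y₊⊗z₋, ξ₃ = x₋⊗y₋⊗z₊ (Kronecker products in ℂ⁸). Then the X-part of the rank-one matrix |ξ⟩⟨ξ| equals (1/4)·(|ξ₀⟩⟨ξ₀| + |ξ₁⟩⟨ξ₁| + |ξ₂⟩⟨ξ₂| + |ξ₃⟩⟨ξ₃|). -/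
open scoped ComplexOrder Matrix

noncomputable section

/-- Kronecker product of three vectors in `ℂ²`, indices in lexicographic order. -/
def kron3 (x y z : Fin 2 → ℂ) : Fin 8 → ℂ := fun i =>
  x ⟨i.val / 4, by have := i.isLt; omega⟩ *
  y ⟨i.val / 2 % 2, by omega⟩ *
  z ⟨i.val % 2, by omega⟩

/-- Kronecker product of three `2×2` matrices, indices in lexicographic order. -/
def kron3M (A B C : Matrix (Fin 2) (Fin 2) ℂ) : Matrix (Fin 8) (Fin 8) ℂ :=
  Matrix.of fun i j =>
    A ⟨i.val / 4, by have := i.isLt; omega⟩ ⟨j.val / 4, by have := j.isLt; omega⟩ *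
    B ⟨i.val / 2 % 2, by omega⟩ ⟨j.val / 2 % 2, by omega⟩ *
    C ⟨i.val % 2, by omega⟩ ⟨j.val % 2, by omega⟩

/-- The rank one matrix `|v⟩⟨v|`. -/
def proj (v : Fin 8 → ℂ) : Matrix (Fin 8) (Fin 8) ℂ :=
  Matrix.of fun i j => v i * star (v j)

/-- The X-part of an `8×8` matrix: keep the diagonal and the anti-diagonal, zero elsewhere. -/
def Xpart (ρ : Matrix (Fin 8) (Fin 8) ℂ) : Matrix (Fin 8) (Fin 8) ℂ :=
  Matrix.of fun i j => if i = j ∨ i.val + j.val = 7 then ρ i j else 0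

/-- A three qubit state: positive semidefinite `8×8` matrix of trace 1. -/
def IsState (ρ : Matrix (Fin 8) (Fin 8) ℂ) : Prop :=
  ρ.PosSemidef ∧ ρ.trace = 1

/-- Unit vector in `ℂ²`. -/
def unitVec (v : Fin 2 → ℂ) : Prop := ∑ j, star (v j) * v j = 1

/-- (Full) separability of a three qubit state: finite convex combination of
pure product states. -/
def IsSep (ρ : Matrix (Fin 8) (Fin 8) ℂ) : Prop :=
  ∃ (n : ℕ) (p : Fin n → ℝ) (x y z : Fin n → Fin 2 → ℂ),
    (∀ k, 0 ≤ p k) ∧ (∑ k, p k = 1) ∧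
    (∀ k, unitVec (x k)) ∧ (∀ k, unitVec (y k)) ∧ (∀ k, unitVec (z k)) ∧
    ρ = ∑ k, (p k : ℂ) • proj (kron3 (x k) (y k) (z k))

/-- The pairing `⟨ϱ, W⟩ = Tr (ϱ Wᵀ)`. -/
def pairing (ρ W : Matrix (Fin 8) (Fin 8) ℂ) : ℂ := (ρ * Wᵀ).trace

/-- Entanglement witness: self-adjoint, not positive semidefinite, and
nonnegative pairing against all separable states. -/
def IsEW (W : Matrix (Fin 8) (Fin 8) ℂ) : Prop :=
  W.IsHermitian ∧ ¬ W.PosSemidef ∧ ∀ ρ, IsSep ρ → 0 ≤ pairing ρ W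

/-- The X-shaped matrix `X(a,b,c)`. -/
def XMat (a b : Fin 4 → ℝ) (c : Fin 4 → ℂ) : Matrix (Fin 8) (Fin 8) ℂ :=
  Matrix.of fun i j =>
    if i = j then
      (if h : i.val < 4 then ((a ⟨i.val, h⟩ : ℝ) : ℂ)
       else ((b ⟨7 - i.val, by have := i.isLt; omega⟩ : ℝ) : ℂ))
    else if h7 : i.val + j.val = 7 then
      (if h : i.val < 4 then c ⟨i.val, h⟩
       else star (c ⟨j.val, by have := i.isLt; omega⟩))
    else 0

/-- The quantity `A(s,t)`. -/
def Afun (s t : Fin 4 → ℝ) : ℝ :=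
  ⨅ r : Set.Ioi (0 : ℝ),
    (Real.sqrt ((s 0 * (r : ℝ)⁻¹ + t 3 * (r : ℝ)) * (s 3 * (r : ℝ)⁻¹ + t 0 * (r : ℝ))) +
     Real.sqrt ((s 1 * (r : ℝ)⁻¹ + t 2 * (r : ℝ)) * (s 2 * (r : ℝ)⁻¹ + t 1 * (r : ℝ))))

/-- The quantity `B(u)`. -/
def Bfun (u : Fin 4 → ℂ) : ℝ :=
  ⨆ θ : ℝ,
    (‖u 0 * Complex.exp ((θ : ℂ) * Complex.I) + star (u 3)‖ +
     ‖u 1 * Complex.exp ((θ : ℂ) * Complex.I) + star (u 2)‖)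

/-- The quantity `C(z)`. -/
def Cfun (z : Fin 4 → ℂ) : ℝ :=
  ⨆ p : ℝ × ℝ × ℝ,
    |(z 0 * Complex.exp (((p.1 + p.2.1 + p.2.2 : ℝ) : ℂ) * Complex.I)).re +
     (z 1 * Complex.exp (((p.1 : ℝ) : ℂ) * Complex.I)).re +
     (z 2 * Complex.exp (((p.2.1 : ℝ) : ℂ) * Complex.I)).re +
     (z 3 * Complex.exp (((p.2.2 : ℝ) : ℂ) * Complex.I)).re|

/-- The quantity `L(ϱ,z)`, where the X-part of `ϱ` is `X(a,b,c)`. -/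
def Lfun (c z : Fin 4 → ℂ) : ℝ :=
  (z 0 * c 0 + z 1 * c 1 + z 2 * c 2 + z 3 * star (c 3)).re

/-- Partial transpose with respect to the first tensor factor. -/
def pt1 (ρ : Matrix (Fin 8) (Fin 8) ℂ) : Matrix (Fin 8) (Fin 8) ℂ :=
  Matrix.of fun i j =>
    ρ ⟨(j.val / 4) * 4 + i.val % 4, by have := i.isLt; have := j.isLt; omega⟩
      ⟨(i.val / 4) * 4 + j.val % 4, by have := i.isLt; have := j.isLt; omega⟩

/-- Partial transpose with respect to the second tensor factor. -/
def pt2 (ρ : Matrix (Fin 8) (Fin 8) ℂ) : Matrix (Fin 8) (Fin 8) ℂ :=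
  Matrix.of fun i j =>
    ρ ⟨(i.val / 4) * 4 + (j.val / 2 % 2) * 2 + i.val % 2,
        by have := i.isLt; have := j.isLt; omega⟩
      ⟨(j.val / 4) * 4 + (i.val / 2 % 2) * 2 + j.val % 2,
        by have := i.isLt; have := j.isLt; omega⟩

/-- Partial transpose with respect to the third tensor factor. -/
def pt3 (ρ : Matrix (Fin 8) (Fin 8) ℂ) : Matrix (Fin 8) (Fin 8) ℂ :=
  Matrix.of fun i j =>
    ρ ⟨(i.val / 4) * 4 + (i.val / 2 % 2) * 2 + j.val % 2,
        by have := i.isLt; have := j.isLt; omega⟩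
      ⟨(j.val / 4) * 4 + (j.val / 2 % 2) * 2 + i.val % 2,
        by have := i.isLt; have := j.isLt; omega⟩

/-- A three qubit state has positive partial transposes. -/
def IsPPT (ρ : Matrix (Fin 8) (Fin 8) ℂ) : Prop :=
  (pt1 ρ).PosSemidef ∧ (pt2 ρ).PosSemidef ∧ (pt3 ρ).PosSemidef

/-- `λ₅` from the anti-diagonal of a GHZ diagonal state. -/
def lam5 (c : Fin 4 → ℝ) : ℝ := 2 * (c 0 + c 1 + c 2 + c 3)
/-- `λ₆`. -/
def lam6 (c : Fin 4 → ℝ) : ℝ := 2 * (-c 0 - c 1 + c 2 + c 3)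
/-- `λ₇`. -/
def lam7 (c : Fin 4 → ℝ) : ℝ := 2 * (-c 0 + c 1 - c 2 + c 3)
/-- `λ₈`. -/
def lam8 (c : Fin 4 → ℝ) : ℝ := 2 * (-c 0 + c 1 + c 2 - c 3)

/-- `t₁`. -/
def tc1 (c : Fin 4 → ℝ) : ℝ :=
  c 0 * (-(c 0)^2 + (c 1)^2 + (c 2)^2 + (c 3)^2) - 2 * c 1 * c 2 * c 3
/-- `t₂`. -/
def tc2 (c : Fin 4 → ℝ) : ℝ :=
  c 1 * ((c 0)^2 - (c 1)^2 + (c 2)^2 + (c 3)^2) - 2 * c 0 * c 2 * c 3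
/-- `t₃`. -/
def tc3 (c : Fin 4 → ℝ) : ℝ :=
  c 2 * ((c 0)^2 + (c 1)^2 - (c 2)^2 + (c 3)^2) - 2 * c 0 * c 1 * c 3
/-- `t₄`. -/
def tc4 (c : Fin 4 → ℝ) : ℝ :=
  c 3 * ((c 0)^2 + (c 1)^2 + (c 2)^2 - (c 3)^2) - 2 * c 0 * c 1 * c 2

/-!
Write `iₖ` for the `k`-th binary digit of `i` and `sₖ = (-1) ^ (iₖ + jₖ)`. Flipping the sign of the
`k`-th factor of `ξ` multiplies entry `(i, j)` of `|ξ⟩⟨ξ|` by `sₖ`, so the average of the four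
matrices has entry `ξᵢ ξ̄ⱼ (1 + s₂s₃ + s₁s₃ + s₁s₂) / 4`. This factor is `1` when `s₁ = s₂ = s₃`
and `0` otherwise, and `s₁ = s₂ = s₃` says exactly that `j = i` or `j = 7 - i`.
-/

/-- `signFlip 0 v = v₊` and `signFlip 1 v = v₋`. -/
def signFlip (e : ℕ) (v : Fin 2 → ℂ) : Fin 2 → ℂ := fun a => (-1) ^ (e * a.val) * v a

@[simp]
lemma signFlip_zero (v : Fin 2 → ℂ) : signFlip 0 v = v := by
  ext a; simp [signFlip]

@[simp]
lemma signFlip_one (v : Fin 2 → ℂ) : signFlip 1 v = ![v 0, -v 1] := by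
  ext a; fin_cases a <;> simp [signFlip]

lemma proj_kron3_signFlip (e₁ e₂ e₃ : ℕ) (x y z : Fin 2 → ℂ) (i j : Fin 8) :
    proj (kron3 (signFlip e₁ x) (signFlip e₂ y) (signFlip e₃ z)) i j =
      (-1) ^ (e₁ * (i.val / 4 + j.val / 4) + e₂ * (i.val / 2 % 2 + j.val / 2 % 2) +
        e₃ * (i.val % 2 + j.val % 2)) * proj (kron3 x y z) i j := by
  simp only [proj, kron3, signFlip, Matrix.of_apply, star_mul', star_pow, star_neg, star_one,
    mul_add, pow_add]
  ring

lemma one_add_neg_one_pow_add_pairs {R : Type*} [Ring R] (a b c : ℕ) :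
    (1 + (-1) ^ (b + c) + (-1) ^ (a + c) + (-1) ^ (a + b) : R) =
      if a % 2 = b % 2 ∧ b % 2 = c % 2 then 4 else 0 := by
  rw [neg_one_pow_eq_pow_mod_two (b + c), neg_one_pow_eq_pow_mod_two (a + c),
    neg_one_pow_eq_pow_mod_two (a + b), Nat.add_mod b, Nat.add_mod a c, Nat.add_mod a b]
  rcases Nat.mod_two_eq_zero_or_one a with ha | ha <;>
  rcases Nat.mod_two_eq_zero_or_one b with hb | hb <;>
  rcases Nat.mod_two_eq_zero_or_one c with hc | hc <;>
  · simp only [ha, hb, hc]; norm_num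

lemma eq_or_add_eq_seven_iff (i j : Fin 8) :
    (i = j ∨ i.val + j.val = 7) ↔
      (i.val / 4 + j.val / 4) % 2 = (i.val / 2 % 2 + j.val / 2 % 2) % 2 ∧
      (i.val / 2 % 2 + j.val / 2 % 2) % 2 = (i.val % 2 + j.val % 2) % 2 := by
  revert i j; decide

/-- the X-part of a pure product state is the average of four
pure product states obtained by sign flips. -/
theorem stmt0 (x y z xm ym zm : Fin 2 → ℂ)
    (hxm : xm = ![x 0, -x 1]) (hym : ym = ![y 0, -y 1]) (hzm : zm = ![z 0, -z 1]) :
    Xpart (proj (kron3 x y z)) =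
      (1 / 4 : ℂ) •
        (proj (kron3 x y z) + proj (kron3 x ym zm) +
         proj (kron3 xm y zm) + proj (kron3 xm ym z)) := by
  subst hxm hym hzm
  ext i j
  have h₁ := proj_kron3_signFlip 0 1 1 x y z i j
  have h₂ := proj_kron3_signFlip 1 0 1 x y z i j
  have h₃ := proj_kron3_signFlip 1 1 0 x y z i j
  simp only [signFlip_zero, signFlip_one, zero_mul, one_mul, zero_add, add_zero] at h₁ h₂ h₃
  have hsigns := one_add_neg_one_pow_add_pairs (R := ℂ) (i.val / 4 + j.val / 4)
    (i.val / 2 % 2 + j.val / 2 % 2) (i.val % 2 + j.val % 2)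
  simp only [Xpart, Matrix.of_apply, Matrix.smul_apply, Matrix.add_apply, smul_eq_mul, h₁, h₂, h₃,
    eq_or_add_eq_seven_iff]
  rw [show ∀ p s₁ s₂ s₃ : ℂ, p + s₁ * p + s₂ * p + s₃ * p = (1 + s₁ + s₂ + s₃) * p from
    fun _ _ _ _ => by ring, hsigns]
  split_ifs <;> ring

end
end

section
/- The X-part of every separable three qubit state is again a separable three qubit state. -/
/-!
The X-part of `ϱ` is the average of the four conjugates `D ϱ D` by the diagonal unitaries
`D = Z^a ⊗ Z^b ⊗ Z^(a+b)`, `a, b ∈ {0, 1}`: the products of their diagonal signs at positions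
`i` and `j` average to `1` when `i = j` or `i + j = 7` (the three bits of `i` and `j` all agree
or all differ) and to `0` otherwise. Conjugating a pure product state by such a `D` gives again
a pure product state, so the X-part of a separable state is a convex combination of pure product
states; the trace is untouched because the diagonal is.
-/

open scoped ComplexOrder Matrix

noncomputable section

def zFlip (a : ℕ) (v : Fin 2 → ℂ) : Fin 2 → ℂ := fun i => (-1) ^ (a * i.val) * v i

lemma unitVec_zFlip (a : ℕ) {v : Fin 2 → ℂ} (h : unitVec v) : unitVec (zFlip a v) := by
  unfold unitVec zFlip at *
  simp only [star_mul', star_pow, star_neg, star_one]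
  convert h using 2 with i
  rw [mul_mul_mul_comm, ← mul_pow, neg_one_mul, neg_neg, one_pow, one_mul]

/-- The diagonal of `Z^a ⊗ Z^b ⊗ Z^(a+b)`. -/
def ghzSign (a b : ℕ) (i : Fin 8) : ℤ :=
  (-1) ^ (a * (i.val / 4) + b * (i.val / 2 % 2) + (a + b) * (i.val % 2))

lemma kron3_zFlip (a b : ℕ) (x y z : Fin 2 → ℂ) (i : Fin 8) :
    kron3 (zFlip a x) (zFlip b y) (zFlip (a + b) z) i = ghzSign a b i * kron3 x y z i := by
  simp only [kron3, zFlip, ghzSign]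
  push_cast
  ring

lemma sum_ghzSign_mul_ghzSign (i j : Fin 8) :
    ∑ a : Fin 2, ∑ b : Fin 2, ghzSign a b i * ghzSign a b j =
      if i = j ∨ i.val + j.val = 7 then 4 else 0 := by
  revert i j; decide

lemma Xpart_sum {ι : Type*} (s : Finset ι) (f : ι → Matrix (Fin 8) (Fin 8) ℂ) :
    Xpart (∑ k ∈ s, f k) = ∑ k ∈ s, Xpart (f k) := by
  ext i j
  simp only [Xpart, Matrix.of_apply, Matrix.sum_apply]
  split_ifs <;> simp

lemma Xpart_smul (c : ℂ) (A : Matrix (Fin 8) (Fin 8) ℂ) : Xpart (c • A) = c • Xpart A := by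
  ext i j
  simp only [Xpart, Matrix.of_apply, Matrix.smul_apply, smul_eq_mul]
  split_ifs <;> simp

lemma trace_Xpart (A : Matrix (Fin 8) (Fin 8) ℂ) : (Xpart A).trace = A.trace := by
  simp [Matrix.trace, Xpart]

lemma Xpart_proj_kron3 (x y z : Fin 2 → ℂ) :
    Xpart (proj (kron3 x y z)) =
      ∑ a : Fin 2, ∑ b : Fin 2,
        (4 : ℂ)⁻¹ • proj (kron3 (zFlip a x) (zFlip b y) (zFlip (a + b) z)) := by
  ext i j
  have hsign := congrArg (Int.cast : ℤ → ℂ) (sum_ghzSign_mul_ghzSign i j)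
  push_cast at hsign
  simp only [Xpart, proj, Matrix.of_apply, Matrix.sum_apply, Matrix.smul_apply, smul_eq_mul,
    kron3_zFlip, star_mul', star_intCast]
  simp only [Fin.sum_univ_two] at hsign ⊢
  split_ifs at hsign ⊢ <;>
    linear_combination -(4 : ℂ)⁻¹ * kron3 x y z i * star (kron3 x y z j) * hsign

lemma isSep_sum_smul_proj {ι : Type*} [Fintype ι] (p : ι → ℝ) (x y z : ι → Fin 2 → ℂ)
    (hp : ∀ k, 0 ≤ p k) (hp1 : ∑ k, p k = 1) (hx : ∀ k, unitVec (x k))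
    (hy : ∀ k, unitVec (y k)) (hz : ∀ k, unitVec (z k)) :
    IsSep (∑ k, (p k : ℂ) • proj (kron3 (x k) (y k) (z k))) := by
  let e := (Fintype.equivFin ι).symm
  refine ⟨Fintype.card ι, p ∘ e, x ∘ e, y ∘ e, z ∘ e, fun k => hp _, ?_,
    fun k => hx _, fun k => hy _, fun k => hz _, ?_⟩
  · rw [← hp1]
    exact e.sum_comp p
  · exact (e.sum_comp fun k => (p k : ℂ) • proj (kron3 (x k) (y k) (z k))).symm

theorem IsSep.xpart {ρ : Matrix (Fin 8) (Fin 8) ℂ} (h : IsSep ρ) : IsSep (Xpart ρ) := by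
  obtain ⟨n, p, x, y, z, hp, hp1, hx, hy, hz, rfl⟩ := h
  have hX : Xpart (∑ k, (p k : ℂ) • proj (kron3 (x k) (y k) (z k))) =
      ∑ m : Fin n × Fin 2 × Fin 2, ((p m.1 / 4 : ℝ) : ℂ) •
        proj (kron3 (zFlip m.2.1 (x m.1)) (zFlip m.2.2 (y m.1))
          (zFlip (m.2.1 + m.2.2) (z m.1))) := by
    simp only [Xpart_sum, Xpart_smul, Xpart_proj_kron3, Finset.smul_sum, smul_smul,
      Fintype.sum_prod_type]
    push_cast
    simp only [div_eq_mul_inv]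
  rw [hX]
  refine isSep_sum_smul_proj _ _ _ _ (fun m => by have := hp m.1; positivity) ?_
    (fun m => unitVec_zFlip _ (hx _)) (fun m => unitVec_zFlip _ (hy _))
    (fun m => unitVec_zFlip _ (hz _))
  simp [Fintype.sum_prod_type, ← Finset.sum_div, ← Finset.mul_sum, hp1]

theorem IsSep.posSemidef {ρ : Matrix (Fin 8) (Fin 8) ℂ} (h : IsSep ρ) : ρ.PosSemidef := by
  obtain ⟨n, p, x, y, z, hp, -, -, -, -, rfl⟩ := h
  exact Matrix.posSemidef_sum _ fun k _ =>
    (Matrix.posSemidef_vecMulVec_self_star _).smul (Complex.zero_le_real.mpr (hp k))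

/-- the X-part of a separable three qubit state is again a
separable three qubit state. -/
theorem stmt1 (ρ : Matrix (Fin 8) (Fin 8) ℂ) (hstate : IsState ρ) (hsep : IsSep ρ) :
    IsState (Xpart ρ) ∧ IsSep (Xpart ρ) :=
  ⟨⟨hsep.xpart.posSemidef, (trace_Xpart ρ).trans hstate.2⟩, hsep.xpart⟩

end
end

section
/- Let W be a three qubit entanglement witness and let W_X be its X-part. If W_X is not positive semidefinite, then W_X is also an entanglement witness. -/
open scoped ComplexOrder Matrix

noncomputable section

/-!
The X-part of `W` is the average of the four conjugates `D W D` by the local sign unitaries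
`D = Z^s ⊗ Z^t ⊗ Z^(s+t)`, `Z = diag(1, -1)`: these form a group whose characters
`i ↦ D i i` separate the index pairs `(i, j)` off the X-shape, so averaging kills exactly
those entries. Conjugation by a local diagonal unitary maps separable states to separable states
and moves across the pairing, so each conjugate `D W D` is nonnegative on separable states,
hence so is their average.
-/

open Matrix

section PhaseDiag

variable {M : Type*} [Monoid M]

/-- The diagonal of `diag(1, a) ⊗ diag(1, b) ⊗ diag(1, c)`. -/
def phaseDiag (a b c : M) (i : Fin 8) : M :=
  a ^ (i.val / 4) * b ^ (i.val / 2 % 2) * c ^ (i.val % 2)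

lemma map_phaseDiag {N F : Type*} [Monoid N] [FunLike F M N] [MonoidHomClass F M N] (f : F)
    (a b c : M) (i : Fin 8) : f (phaseDiag a b c i) = phaseDiag (f a) (f b) (f c) i := by
  simp only [phaseDiag, map_mul, map_pow]

end PhaseDiag

lemma unitVec_pow_mul {a : ℂ} (ha : star a * a = 1) {v : Fin 2 → ℂ} (hv : unitVec v) :
    unitVec fun j => a ^ j.val * v j := by
  simp only [unitVec, Fin.sum_univ_two, Fin.val_zero, Fin.val_one, pow_zero, pow_one, one_mul,
    star_one, star_mul'] at hv ⊢
  rwa [mul_mul_mul_comm, ha, one_mul]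

lemma kron3_pow_mul (a b c : ℂ) (x y z : Fin 2 → ℂ) :
    kron3 (fun j => a ^ j.val * x j) (fun j => b ^ j.val * y j) (fun j => c ^ j.val * z j)
      = phaseDiag a b c * kron3 x y z := by
  ext i
  simp only [kron3, phaseDiag, Pi.mul_apply]
  ring

lemma proj_mul (d v : Fin 8 → ℂ) : proj (d * v) = diagonal d * proj v * (diagonal d)ᴴ := by
  ext i j
  simp only [proj, of_apply, Pi.mul_apply, diagonal_conjTranspose, mul_diagonal, diagonal_mul,
    Pi.star_apply, star_mul]
  ring

lemma IsSep.diagonal_phaseDiag_conj {a b c : ℂ} (ha : star a * a = 1) (hb : star b * b = 1)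
    (hc : star c * c = 1) {ρ : Matrix (Fin 8) (Fin 8) ℂ} (hρ : IsSep ρ) :
    IsSep (diagonal (phaseDiag a b c) * ρ * (diagonal (phaseDiag a b c))ᴴ) := by
  obtain ⟨n, p, x, y, z, hp, hp1, hx, hy, hz, rfl⟩ := hρ
  refine ⟨n, p, fun k j => a ^ j.val * x k j, fun k j => b ^ j.val * y k j,
    fun k j => c ^ j.val * z k j, hp, hp1, fun k => unitVec_pow_mul ha (hx k),
    fun k => unitVec_pow_mul hb (hy k), fun k => unitVec_pow_mul hc (hz k), ?_⟩
  simp only [kron3_pow_mul, proj_mul, Finset.mul_sum, Finset.sum_mul, Matrix.mul_smul,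
    Matrix.smul_mul]

lemma pairing_conj (D ρ W : Matrix (Fin 8) (Fin 8) ℂ) :
    pairing ρ (D * W * Dᴴ) = pairing (Dᵀ * ρ * Dᵀᴴ) W := by
  rw [pairing, pairing, transpose_mul, transpose_mul,
    ← conjTranspose_transpose_eq_transpose_conjTranspose, Matrix.mul_assoc, Matrix.mul_assoc,
    trace_mul_comm Dᵀ]
  simp only [Matrix.mul_assoc]

/-- The sign diagonal of `Z^s ⊗ Z^t ⊗ Z^(s+t)`. -/
def signDiag (st : Fin 2 × Fin 2) : Fin 8 → ℤ :=
  phaseDiag ((-1) ^ st.1.val) ((-1) ^ st.2.val) ((-1) ^ (st.1.val + st.2.val))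

lemma sum_signDiag_mul (i j : Fin 8) :
    ∑ st, signDiag st i * signDiag st j = if i = j ∨ i.val + j.val = 7 then 4 else 0 := by
  revert i j
  decide

def signUnitary (st : Fin 2 × Fin 2) : Matrix (Fin 8) (Fin 8) ℂ :=
  diagonal fun i => (signDiag st i : ℂ)

lemma signUnitary_eq_diagonal_phaseDiag (st : Fin 2 × Fin 2) :
    signUnitary st = diagonal (phaseDiag ((-1) ^ st.1.val) ((-1) ^ st.2.val)
      ((-1) ^ (st.1.val + st.2.val))) := by
  rw [signUnitary]
  congr 1
  ext i
  simp [signDiag, ← Int.coe_castRingHom, map_phaseDiag]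

lemma transpose_signUnitary (st : Fin 2 × Fin 2) : (signUnitary st)ᵀ = signUnitary st :=
  diagonal_transpose _

lemma IsSep.signUnitary_conj (st : Fin 2 × Fin 2) {ρ : Matrix (Fin 8) (Fin 8) ℂ}
    (hρ : IsSep ρ) : IsSep (signUnitary st * ρ * (signUnitary st)ᴴ) := by
  rw [signUnitary_eq_diagonal_phaseDiag]
  exact hρ.diagonal_phaseDiag_conj (by simp [← mul_pow]) (by simp [← mul_pow])
    (by simp [← mul_pow])

lemma Xpart_eq_average (W : Matrix (Fin 8) (Fin 8) ℂ) :
    Xpart W = (4 : ℂ)⁻¹ • ∑ st, signUnitary st * W * (signUnitary st)ᴴ := by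
  ext i j
  have hsum : ∑ st, (signDiag st i : ℂ) * signDiag st j
      = if i = j ∨ i.val + j.val = 7 then 4 else 0 :=
    mod_cast sum_signDiag_mul i j
  simp only [Xpart, signUnitary, of_apply, Matrix.smul_apply, Matrix.sum_apply,
    diagonal_conjTranspose, mul_diagonal, diagonal_mul, Pi.star_apply, star_intCast, smul_eq_mul]
  simp_rw [mul_right_comm _ (W i j), ← Finset.sum_mul, hsum]
  split_ifs <;> simp

lemma Xpart_isHermitian {W : Matrix (Fin 8) (Fin 8) ℂ} (hW : W.IsHermitian) :
    (Xpart W).IsHermitian := by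
  ext i j
  simp only [Xpart, conjTranspose_apply, of_apply]
  have hX : (j = i ∨ j.val + i.val = 7) ↔ (i = j ∨ i.val + j.val = 7) := by
    simp only [Fin.ext_iff]
    omega
  rw [if_congr hX rfl rfl]
  split_ifs
  · exact hW.apply i j
  · exact star_zero _

lemma pairing_smul_sum (ρ : Matrix (Fin 8) (Fin 8) ℂ) (c : ℂ) {ι : Type*} (s : Finset ι)
    (W : ι → Matrix (Fin 8) (Fin 8) ℂ) :
    pairing ρ (c • ∑ k ∈ s, W k) = c * ∑ k ∈ s, pairing ρ (W k) := by
  simp [pairing, transpose_sum, Matrix.mul_sum, trace_sum]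

/-- the X-part of a three qubit entanglement witness is again an
entanglement witness, provided it is not positive semidefinite. -/
theorem stmt2 (W : Matrix (Fin 8) (Fin 8) ℂ) (hW : IsEW W)
    (h : ¬ (Xpart W).PosSemidef) : IsEW (Xpart W) := by
  obtain ⟨hherm, -, hpair⟩ := hW
  refine ⟨Xpart_isHermitian hherm, h, fun ρ hρ => ?_⟩
  rw [Xpart_eq_average, pairing_smul_sum]
  refine mul_nonneg (inv_nonneg.mpr (by norm_num)) (Finset.sum_nonneg fun st _ => ?_)
  rw [pairing_conj, transpose_signUnitary]
  exact hpair _ (hρ.signUnitary_conj st)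

end
end

section
/- Let s,t ∈ ℝ⁴ have nonnegative entries and u ∈ ℂ⁴, and suppose W = X(s,t,u) is not positive semidefinite. Then W is an entanglement witness if and only if A(s,t) ≥ B(u). -/
open scoped ComplexOrder Matrix

noncomputable section

/-!
On a product vector `x ⊗ y ⊗ z` the pairing with `X(s,t,u)` is a diagonal part plus twice the
real part of an anti-diagonal part. In the ratios `r = |x₁|/|x₀|`, `p = |y₀ z₀|/|y₁ z₁|`,
`q = |y₀ z₁|/|y₁ z₀|` the diagonal part is `K (P₁ p + P₂/p + P₃ q + P₄/q)` with
`K = |x₀ x₁ y₀ y₁ z₀ z₁|` and `P₁, …, P₄` the four factors `s_i r⁻¹ + t_j r` of `A(s,t)`;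
by AM-GM its infimum over `p, q` is `2 K (√(P₁P₂) + √(P₃P₄))`. The anti-diagonal part has modulus
at most `K B(u)`, and for each `θ` the phases of `x, y, z` can be chosen to make it
`-K (|u₀ e^{iθ} + ū₃| + |u₁ e^{iθ} + ū₂|)`, whatever the moduli. Hence the pairing is
nonnegative on all product vectors iff `A ≥ B`, and on separable states by linearity.
-/
open Filter Topology ComplexConjugate Complex

lemma two_mul_sqrt_mul_le_mul_add_div {a b p : ℝ} (ha : 0 ≤ a) (hb : 0 ≤ b) (hp : 0 < p) :
    2 * √(a * b) ≤ a * p + b / p := by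
  have hab : √(a * b) = √(a * p) * √(b / p) := by
    rw [← Real.sqrt_mul (by positivity)]
    field_simp
  rw [hab]
  nlinarith [sq_nonneg (√(a * p) - √(b / p)), Real.sq_sqrt (by positivity : 0 ≤ a * p),
    Real.sq_sqrt (by positivity : 0 ≤ b / p)]

lemma le_two_mul_sqrt_mul_of_forall_le {a b c : ℝ} (ha : 0 ≤ a) (hb : 0 ≤ b)
    (h : ∀ p > 0, c ≤ a * p + b / p) : c ≤ 2 * √(a * b) := by
  -- The infimum `2 √(ab)` is not attained when `a b = 0`; use the minimisers for `a + δ, b + δ`.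
  have hlim : Tendsto (fun δ : ℝ => 2 * (√(a + δ) * √(b + δ))) (𝓝[>] 0)
      (𝓝 (2 * √(a * b))) := by
    have hcont : Continuous fun δ : ℝ => 2 * (√(a + δ) * √(b + δ)) := by fun_prop
    simpa [Real.sqrt_mul ha] using (hcont.tendsto 0).mono_left nhdsWithin_le_nhds
  refine ge_of_tendsto hlim ?_
  filter_upwards [self_mem_nhdsWithin] with δ (hδ : 0 < δ)
  have hA : 0 < √(a + δ) := Real.sqrt_pos.2 (by linarith)
  have hB : 0 < √(b + δ) := Real.sqrt_pos.2 (by linarith)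
  calc c ≤ a * (√(b + δ) / √(a + δ)) + b / (√(b + δ) / √(a + δ)) := h _ (by positivity)
    _ ≤ (a + δ) * (√(b + δ) / √(a + δ)) + (b + δ) / (√(b + δ) / √(a + δ)) := by
      gcongr <;> linarith
    _ = 2 * (√(a + δ) * √(b + δ)) := by
      field_simp
      rw [Real.sq_sqrt (by linarith), Real.sq_sqrt (by linarith)]
      ring

lemma exists_sq_add_sq_eq_one_div_eq {ρ : ℝ} (hρ : 0 < ρ) :
    ∃ v₀ v₁ : ℝ, 0 < v₀ ∧ 0 < v₁ ∧ v₀ ^ 2 + v₁ ^ 2 = 1 ∧ v₀ / v₁ = ρ := by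
  have hn : 0 < √(1 + ρ ^ 2) := Real.sqrt_pos.2 (by positivity)
  refine ⟨ρ / √(1 + ρ ^ 2), 1 / √(1 + ρ ^ 2), by positivity, by positivity, ?_, by field_simp⟩
  rw [div_pow, div_pow, Real.sq_sqrt (by positivity)]
  field_simp
  ring

lemma exists_sq_add_sq_eq_one_ratios_eq {p q : ℝ} (hp : 0 < p) (hq : 0 < q) :
    ∃ b₀ b₁ c₀ c₁ : ℝ, 0 < b₀ ∧ 0 < b₁ ∧ 0 < c₀ ∧ 0 < c₁ ∧
      b₀ ^ 2 + b₁ ^ 2 = 1 ∧ c₀ ^ 2 + c₁ ^ 2 = 1 ∧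
      b₀ * c₀ / (b₁ * c₁) = p ∧ b₀ * c₁ / (b₁ * c₀) = q := by
  obtain ⟨b₀, b₁, hb₀, hb₁, hb, hbr⟩ :=
    exists_sq_add_sq_eq_one_div_eq (Real.sqrt_pos.2 (mul_pos hp hq))
  obtain ⟨c₀, c₁, hc₀, hc₁, hc, hcr⟩ :=
    exists_sq_add_sq_eq_one_div_eq (Real.sqrt_pos.2 (div_pos hp hq))
  refine ⟨b₀, b₁, c₀, c₁, hb₀, hb₁, hc₀, hc₁, hb, hc, ?_, ?_⟩
  · rw [mul_div_mul_comm, hbr, hcr, ← Real.sqrt_mul (by positivity),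
      show p * q * (p / q) = p ^ 2 by field_simp, Real.sqrt_sq hp.le]
  · rw [show b₀ * c₁ / (b₁ * c₀) = b₀ / b₁ / (c₀ / c₁) by field_simp, hbr, hcr,
      ← Real.sqrt_div (by positivity), show p * q / (p / q) = q ^ 2 by field_simp,
      Real.sqrt_sq hq.le]

section AfunBfun

variable (s t : Fin 4 → ℝ) (u : Fin 4 → ℂ)

def Aterm (r : ℝ) : ℝ :=
  √((s 0 * r⁻¹ + t 3 * r) * (s 3 * r⁻¹ + t 0 * r)) +
    √((s 1 * r⁻¹ + t 2 * r) * (s 2 * r⁻¹ + t 1 * r))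

def Bterm (θ : ℝ) : ℝ :=
  ‖u 0 * exp (θ * I) + star (u 3)‖ + ‖u 1 * exp (θ * I) + star (u 2)‖

def aForm (r p q : ℝ) : ℝ :=
  (s 0 * r⁻¹ + t 3 * r) * p + (s 3 * r⁻¹ + t 0 * r) / p +
    ((s 1 * r⁻¹ + t 2 * r) * q + (s 2 * r⁻¹ + t 1 * r) / q)

variable {s t}

lemma Aterm_nonneg (r : ℝ) : 0 ≤ Aterm s t r := by
  unfold Aterm; positivity

lemma Afun_le_Aterm {r : ℝ} (hr : 0 < r) : Afun s t ≤ Aterm s t r :=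
  ciInf_le ⟨0, by rintro _ ⟨q, rfl⟩; exact Aterm_nonneg _⟩ (⟨r, hr⟩ : Set.Ioi (0 : ℝ))

lemma Bterm_le (θ : ℝ) : Bterm u θ ≤ ‖u 0‖ + ‖u 3‖ + (‖u 1‖ + ‖u 2‖) := by
  unfold Bterm
  gcongr <;> refine (norm_add_le _ _).trans_eq ?_ <;> simp

lemma Bterm_le_Bfun (θ : ℝ) : Bterm u θ ≤ Bfun u :=
  le_ciSup ⟨_, by rintro _ ⟨θ, rfl⟩; exact Bterm_le u θ⟩ θ

lemma Bfun_le_Afun_of_forall (h : ∀ θ : ℝ, ∀ r > 0, Bterm u θ ≤ Aterm s t r) :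
    Bfun u ≤ Afun s t :=
  ciSup_le fun θ => le_ciInf fun r => h θ r r.2

variable (hs : ∀ i, 0 ≤ s i) (ht : ∀ i, 0 ≤ t i)
include hs ht

lemma two_mul_Aterm_le_aForm {r p q : ℝ} (hr : 0 < r) (hp : 0 < p) (hq : 0 < q) :
    2 * Aterm s t r ≤ aForm s t r p q := by
  have := hs 0; have := hs 1; have := hs 2; have := hs 3
  have := ht 0; have := ht 1; have := ht 2; have := ht 3
  unfold Aterm aForm
  linarith [two_mul_sqrt_mul_le_mul_add_div (a := s 0 * r⁻¹ + t 3 * r)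
      (b := s 3 * r⁻¹ + t 0 * r) (by positivity) (by positivity) hp,
    two_mul_sqrt_mul_le_mul_add_div (a := s 1 * r⁻¹ + t 2 * r)
      (b := s 2 * r⁻¹ + t 1 * r) (by positivity) (by positivity) hq]

lemma le_Aterm_of_forall_le_aForm {r B : ℝ} (hr : 0 < r)
    (h : ∀ p > 0, ∀ q > 0, 2 * B ≤ aForm s t r p q) : B ≤ Aterm s t r := by
  have := hs 0; have := hs 1; have := hs 2; have := hs 3
  have := ht 0; have := ht 1; have := ht 2; have := ht 3
  unfold aForm at h
  unfold Aterm
  set P₁ := s 0 * r⁻¹ + t 3 * r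
  set P₂ := s 3 * r⁻¹ + t 0 * r
  set P₃ := s 1 * r⁻¹ + t 2 * r
  set P₄ := s 2 * r⁻¹ + t 1 * r
  have h₁ : ∀ q > 0, 2 * B - (P₃ * q + P₄ / q) ≤ 2 * √(P₁ * P₂) := fun q hq =>
    le_two_mul_sqrt_mul_of_forall_le (by positivity) (by positivity) fun p hp => by
      linarith [h p hp q hq]
  have h₂ : 2 * B - 2 * √(P₁ * P₂) ≤ 2 * √(P₃ * P₄) :=
    le_two_mul_sqrt_mul_of_forall_le (by positivity) (by positivity) fun q hq => by
      linarith [h₁ q hq]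
  linarith

end AfunBfun

lemma conj_exp_ofReal_mul_I (x : ℝ) : conj (exp (x * I)) = exp (↑(-x) * I) := by
  rw [← exp_conj]; simp

lemma exp_ofReal_mul_I_mul (x y : ℝ) : exp (x * I) * exp (y * I) = exp (↑(x + y) * I) := by
  rw [← exp_add]; push_cast; ring_nf

lemma neg_norm_le_re (w : ℂ) : -‖w‖ ≤ w.re :=
  neg_le_of_abs_le (abs_re_le_norm w)

lemma re_mul_exp_pi_sub_arg (w : ℂ) : (w * exp (↑(Real.pi - arg w) * I)).re = -‖w‖ := by
  calc (w * exp (↑(Real.pi - arg w) * I)).re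
      = (‖w‖ * (exp (arg w * I) * exp (↑(Real.pi - arg w) * I))).re := by
        rw [← mul_assoc, norm_mul_exp_arg_mul_I]
    _ = -‖w‖ := by
        rw [exp_ofReal_mul_I_mul, add_sub_cancel, exp_pi_mul_I]
        simp

def twist (v w : ℂ) (φ : ℝ) : ℂ := v * exp (φ * I) + conj (w * exp (φ * I))

lemma norm_twist (v w : ℂ) (φ : ℝ) : ‖twist v w φ‖ = ‖v * exp (↑(2 * φ) * I) + conj w‖ := by
  have h : twist v w φ = exp (↑(-φ) * I) * (v * exp (↑(2 * φ) * I) + conj w) := by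
    rw [twist, map_mul, conj_exp_ofReal_mul_I, mul_add, mul_left_comm, exp_ofReal_mul_I_mul]
    ring_nf
  rw [h, norm_mul, norm_exp_ofReal_mul_I, one_mul]

lemma Bterm_two_mul (u : Fin 4 → ℂ) (φ : ℝ) :
    Bterm u (2 * φ) = ‖twist (u 0) (u 3) φ‖ + ‖twist (u 1) (u 2) φ‖ := by
  rw [norm_twist, norm_twist]; rfl

section Pairing

variable (s t : Fin 4 → ℝ) (u : Fin 4 → ℂ)

def crossTerm (β γ : ℂ) : ℂ :=
  u 0 * (β * γ) + u 1 * (β * conj γ) + u 2 * (conj β * γ) + u 3 * (conj β * conj γ)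

def diagForm (a b c : Fin 2 → ℝ) : ℝ :=
  a 0 ^ 2 * (s 0 * b 0 ^ 2 * c 0 ^ 2 + s 1 * b 0 ^ 2 * c 1 ^ 2 + s 2 * b 1 ^ 2 * c 0 ^ 2
      + s 3 * b 1 ^ 2 * c 1 ^ 2) +
    a 1 ^ 2 * (t 3 * b 0 ^ 2 * c 0 ^ 2 + t 2 * b 0 ^ 2 * c 1 ^ 2 + t 1 * b 1 ^ 2 * c 0 ^ 2
      + t 0 * b 1 ^ 2 * c 1 ^ 2)

lemma pairing_proj_kron3 (x y z : Fin 2 → ℂ) :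
    pairing (proj (kron3 x y z)) (XMat s t u) =
      ((diagForm s t (‖x ·‖) (‖y ·‖) (‖z ·‖) +
        2 * (x 0 * conj (x 1) * crossTerm u (y 0 * conj (y 1)) (z 0 * conj (z 1))).re : ℝ) : ℂ) := by
  have hre : ∀ w : ℂ, ((2 * w.re : ℝ) : ℂ) = w + conj w := fun w => (add_conj w).symm
  have hsq : ∀ w : ℂ, (‖w‖ : ℂ) ^ 2 = w * conj w := fun w => by
    rw [mul_conj, normSq_eq_norm_sq]; push_cast; rfl
  rw [ofReal_add, hre]
  simp only [diagForm, crossTerm, ofReal_add, ofReal_mul, ofReal_pow, hsq, map_add, map_mul,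
    conj_conj]
  simp only [pairing, Matrix.trace, Matrix.diag, Matrix.mul_apply, proj, Matrix.transpose_apply,
    Matrix.of_apply, Fin.sum_univ_eight]
  simp [XMat, kron3]
  ring

lemma re_mul_crossTerm (α β γ : ℂ) :
    (α * crossTerm u β γ).re =
      ((u 0 * α + conj (u 3 * α)) * (β * γ)).re + ((u 1 * α + conj (u 2 * α)) * (β * conj γ)).re := by
  simp only [crossTerm, mul_re, add_re, conj_re, conj_im, add_im, mul_im]
  ring

lemma XMat_isHermitian : (XMat s t u).IsHermitian := by
  ext i j
  fin_cases i <;> fin_cases j <;> simp [XMat]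

end Pairing

section Polar

variable (u : Fin 4 → ℂ)

lemma re_ofReal_mul_exp_mul_crossTerm (k φ : ℝ) (β γ : ℂ) :
    ((k * exp (φ * I)) * crossTerm u β γ).re =
      k * ((twist (u 0) (u 3) φ * (β * γ)).re + (twist (u 1) (u 2) φ * (β * conj γ)).re) := by
  have h : ∀ v w : ℂ, v * (k * exp (φ * I)) + conj (w * (k * exp (φ * I))) = k * twist v w φ :=
    fun v w => by simp only [twist, map_mul, conj_ofReal]; ring
  rw [re_mul_crossTerm, h, h, mul_assoc, mul_assoc, re_ofReal_mul, re_ofReal_mul, mul_add]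

lemma neg_mul_Bfun_le_re_mul_crossTerm (α β γ : ℂ) :
    -(‖α‖ * (‖β‖ * ‖γ‖) * Bfun u) ≤ (α * crossTerm u β γ).re := by
  conv_rhs => rw [← norm_mul_exp_arg_mul_I α]
  rw [re_ofReal_mul_exp_mul_crossTerm]
  have h₁ := neg_norm_le_re (twist (u 0) (u 3) (arg α) * (β * γ))
  have h₂ := neg_norm_le_re (twist (u 1) (u 2) (arg α) * (β * conj γ))
  have hB := Bterm_le_Bfun u (2 * arg α)
  rw [Bterm_two_mul] at hB
  simp only [norm_mul, norm_conj] at h₁ h₂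
  have hT : (‖twist (u 0) (u 3) (arg α)‖ + ‖twist (u 1) (u 2) (arg α)‖) * (‖β‖ * ‖γ‖) ≤
      ‖β‖ * ‖γ‖ * Bfun u := by
    rw [mul_comm]; gcongr
  calc -(‖α‖ * (‖β‖ * ‖γ‖) * Bfun u)
      ≤ ‖α‖ * -((‖twist (u 0) (u 3) (arg α)‖ + ‖twist (u 1) (u 2) (arg α)‖) * (‖β‖ * ‖γ‖)) := by
        rw [mul_neg, neg_le_neg_iff, mul_assoc]
        gcongr
    _ ≤ _ := by gcongr; linarith

lemma exists_phases_re_crossTerm_eq (θ : ℝ) :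
    ∃ ψ₂ ψ₃ : ℝ, ∀ k₁ k₂ k₃ : ℝ,
      ((k₁ * exp (↑(θ / 2) * I)) * crossTerm u (k₂ * exp (ψ₂ * I)) (k₃ * exp (ψ₃ * I))).re =
        -(k₁ * (k₂ * k₃) * Bterm u θ) := by
  set ω₁ := twist (u 0) (u 3) (θ / 2)
  set ω₂ := twist (u 1) (u 2) (θ / 2)
  -- `ψ₂ ± ψ₃ = π - arg ω₁,₂` turn both summands of `re_ofReal_mul_exp_mul_crossTerm` negative.
  refine ⟨Real.pi - (arg ω₁ + arg ω₂) / 2, (arg ω₂ - arg ω₁) / 2, fun k₁ k₂ k₃ => ?_⟩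
  have h₁ : (k₂ * exp (↑(Real.pi - (arg ω₁ + arg ω₂) / 2) * I)) *
      (k₃ * exp (↑((arg ω₂ - arg ω₁) / 2) * I)) = ↑(k₂ * k₃) * exp (↑(Real.pi - arg ω₁) * I) := by
    rw [mul_mul_mul_comm, exp_ofReal_mul_I_mul]
    push_cast; ring_nf
  have h₂ : (k₂ * exp (↑(Real.pi - (arg ω₁ + arg ω₂) / 2) * I)) *
      conj (k₃ * exp (↑((arg ω₂ - arg ω₁) / 2) * I)) =
        ↑(k₂ * k₃) * exp (↑(Real.pi - arg ω₂) * I) := by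
    rw [map_mul, conj_ofReal, conj_exp_ofReal_mul_I, mul_mul_mul_comm, exp_ofReal_mul_I_mul]
    push_cast; ring_nf
  have hB : Bterm u θ = ‖ω₁‖ + ‖ω₂‖ := by
    rw [← Bterm_two_mul]; congr 1; ring
  rw [re_ofReal_mul_exp_mul_crossTerm, h₁, h₂, mul_left_comm, re_ofReal_mul,
    re_mul_exp_pi_sub_arg, mul_left_comm ω₂, re_ofReal_mul, re_mul_exp_pi_sub_arg, hB]
  ring

end Polar

section Witness

variable {s t : Fin 4 → ℝ} (u : Fin 4 → ℂ)

lemma diagForm_eq_mul_aForm {a b c : Fin 2 → ℝ} (ha : ∀ i, 0 < a i) (hb : ∀ i, 0 < b i)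
    (hc : ∀ i, 0 < c i) :
    diagForm s t a b c = a 0 * a 1 * (b 0 * b 1) * (c 0 * c 1) *
      aForm s t (a 1 / a 0) (b 0 * c 0 / (b 1 * c 1)) (b 0 * c 1 / (b 1 * c 0)) := by
  have := ha 0; have := ha 1; have := hb 0; have := hb 1; have := hc 0; have := hc 1
  unfold diagForm aForm
  field_simp
  ring

variable (hs : ∀ i, 0 ≤ s i) (ht : ∀ i, 0 ≤ t i)
include hs ht

lemma two_mul_Afun_le_diagForm {a b c : Fin 2 → ℝ} (ha : ∀ i, 0 ≤ a i) (hb : ∀ i, 0 ≤ b i)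
    (hc : ∀ i, 0 ≤ c i) :
    2 * (a 0 * a 1 * (b 0 * b 1) * (c 0 * c 1)) * Afun s t ≤ diagForm s t a b c := by
  by_cases hK : a 0 * a 1 * (b 0 * b 1) * (c 0 * c 1) = 0
  · have := hs 0; have := hs 1; have := hs 2; have := hs 3
    have := ht 0; have := ht 1; have := ht 2; have := ht 3
    rw [hK, mul_zero, zero_mul]
    unfold diagForm
    positivity
  · simp only [mul_eq_zero, not_or] at hK
    obtain ⟨⟨⟨ha₀, ha₁⟩, hb₀, hb₁⟩, hc₀, hc₁⟩ := hK
    have pos : ∀ v : Fin 2 → ℝ, (∀ i, 0 ≤ v i) → v 0 ≠ 0 → v 1 ≠ 0 → ∀ i, 0 < v i := by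
      intro v hv h₀ h₁ i
      fin_cases i
      exacts [(hv 0).lt_of_ne' h₀, (hv 1).lt_of_ne' h₁]
    have ha' := pos a ha ha₀ ha₁
    have hb' := pos b hb hb₀ hb₁
    have hc' := pos c hc hc₀ hc₁
    have := ha' 0; have := ha' 1; have := hb' 0; have := hb' 1; have := hc' 0; have := hc' 1
    rw [diagForm_eq_mul_aForm ha' hb' hc', mul_comm 2, mul_assoc]
    gcongr
    exact (mul_le_mul_of_nonneg_left (Afun_le_Aterm (by positivity)) zero_le_two).trans
      (two_mul_Aterm_le_aForm hs ht (by positivity) (by positivity) (by positivity))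

lemma pairing_proj_kron3_nonneg (hBA : Bfun u ≤ Afun s t) (x y z : Fin 2 → ℂ) :
    0 ≤ pairing (proj (kron3 x y z)) (XMat s t u) := by
  rw [pairing_proj_kron3, zero_le_real]
  have hD := two_mul_Afun_le_diagForm hs ht (a := (‖x ·‖)) (b := (‖y ·‖)) (c := (‖z ·‖))
    (fun _ => norm_nonneg _) (fun _ => norm_nonneg _) (fun _ => norm_nonneg _)
  have hC := neg_mul_Bfun_le_re_mul_crossTerm u (x 0 * conj (x 1)) (y 0 * conj (y 1))
    (z 0 * conj (z 1))
  simp only [norm_mul, norm_conj] at hC hD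
  have hK : ‖x 0‖ * ‖x 1‖ * (‖y 0‖ * ‖y 1‖ * (‖z 0‖ * ‖z 1‖)) * Bfun u ≤
      ‖x 0‖ * ‖x 1‖ * (‖y 0‖ * ‖y 1‖) * (‖z 0‖ * ‖z 1‖) * Afun s t := by
    rw [← mul_assoc _ (‖y 0‖ * ‖y 1‖)]
    gcongr
  linarith

end Witness

lemma pairing_nonneg_of_isSep {W ρ : Matrix (Fin 8) (Fin 8) ℂ}
    (h : ∀ x y z, 0 ≤ pairing (proj (kron3 x y z)) W) (hρ : IsSep ρ) : 0 ≤ pairing ρ W := by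
  obtain ⟨n, p, x, y, z, hp, -, -, -, -, rfl⟩ := hρ
  simp only [pairing, Matrix.sum_mul, Matrix.trace_sum, Matrix.smul_mul, Matrix.trace_smul,
    smul_eq_mul]
  exact Finset.sum_nonneg fun k _ => mul_nonneg (zero_le_real.2 (hp k)) (h _ _ _)

lemma isSep_proj_kron3 {x y z : Fin 2 → ℂ} (hx : unitVec x) (hy : unitVec y) (hz : unitVec z) :
    IsSep (proj (kron3 x y z)) :=
  ⟨1, fun _ => 1, fun _ => x, fun _ => y, fun _ => z, fun _ => zero_le_one, by simp,
    fun _ => hx, fun _ => hy, fun _ => hz, by simp⟩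

def polarVec (v₀ v₁ φ : ℝ) : Fin 2 → ℂ := ![v₀ * exp (φ * I), v₁]

section PolarVec

variable {v₀ v₁ : ℝ} (φ : ℝ)

lemma unitVec_polarVec (h : v₀ ^ 2 + v₁ ^ 2 = 1) : unitVec (polarVec v₀ v₁ φ) := by
  have hn : star (exp (φ * I)) * exp (φ * I) = 1 := by
    rw [star_def, conj_exp_ofReal_mul_I, exp_ofReal_mul_I_mul, neg_add_cancel]
    simp
  simp only [unitVec, polarVec, Fin.sum_univ_two, Matrix.cons_val_zero, Matrix.cons_val_one]
  rw [star_mul', mul_mul_mul_comm, hn, mul_one]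
  simp only [star_def, conj_ofReal]
  exact_mod_cast (by rw [← h]; ring : v₀ * v₀ + v₁ * v₁ = 1)

lemma norm_polarVec (h₀ : 0 ≤ v₀) (h₁ : 0 ≤ v₁) : (‖polarVec v₀ v₁ φ ·‖) = ![v₀, v₁] := by
  ext i
  fin_cases i <;> simp [polarVec, abs_of_nonneg, h₀, h₁]

lemma polarVec_mul_conj : polarVec v₀ v₁ φ 0 * conj (polarVec v₀ v₁ φ 1) =
    ↑(v₀ * v₁) * exp (φ * I) := by
  simp [polarVec]; ring

end PolarVec

lemma Bterm_le_Aterm_of_nonneg_on_products {s t : Fin 4 → ℝ} {u : Fin 4 → ℂ}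
    (hs : ∀ i, 0 ≤ s i) (ht : ∀ i, 0 ≤ t i)
    (h : ∀ x y z, unitVec x → unitVec y → unitVec z → 0 ≤ pairing (proj (kron3 x y z)) (XMat s t u))
    (θ : ℝ) {r : ℝ} (hr : 0 < r) : Bterm u θ ≤ Aterm s t r := by
  obtain ⟨ψ₂, ψ₃, hψ⟩ := exists_phases_re_crossTerm_eq u θ
  refine le_Aterm_of_forall_le_aForm hs ht hr fun p hp q hq => ?_
  obtain ⟨a₁, a₀, ha₁, ha₀, ha, hr'⟩ := exists_sq_add_sq_eq_one_div_eq hr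
  obtain ⟨b₀, b₁, c₀, c₁, hb₀, hb₁, hc₀, hc₁, hb, hc, hp', hq'⟩ :=
    exists_sq_add_sq_eq_one_ratios_eq hp hq
  have hpair := h _ _ _ (unitVec_polarVec (θ / 2) (by linarith [ha] : a₀ ^ 2 + a₁ ^ 2 = 1))
    (unitVec_polarVec ψ₂ hb) (unitVec_polarVec ψ₃ hc)
  have vec_pos : ∀ {v₀ v₁ : ℝ}, 0 < v₀ → 0 < v₁ → ∀ i, 0 < (![v₀, v₁] : Fin 2 → ℝ) i :=
    fun h₀ h₁ i => by fin_cases i <;> simpa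
  rw [pairing_proj_kron3, norm_polarVec _ ha₀.le ha₁.le, norm_polarVec _ hb₀.le hb₁.le,
    norm_polarVec _ hc₀.le hc₁.le, polarVec_mul_conj, polarVec_mul_conj, polarVec_mul_conj,
    hψ, zero_le_real, diagForm_eq_mul_aForm (vec_pos ha₀ ha₁) (vec_pos hb₀ hb₁) (vec_pos hc₀ hc₁)]
    at hpair
  simp only [Matrix.cons_val_zero, Matrix.cons_val_one, hr', hp', hq'] at hpair
  have hK : 0 < a₀ * a₁ * (b₀ * b₁) * (c₀ * c₁) := by positivity
  refine le_of_mul_le_mul_left ?_ hK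
  linarith

/-- a non-positive X-shaped matrix `X(s,t,u)` with `s,t ≥ 0` is an
entanglement witness iff `A(s,t) ≥ B(u)`. -/
theorem stmt4 (s t : Fin 4 → ℝ) (u : Fin 4 → ℂ)
    (hs : ∀ i, 0 ≤ s i) (ht : ∀ i, 0 ≤ t i)
    (hnp : ¬ (XMat s t u).PosSemidef) :
    IsEW (XMat s t u) ↔ Bfun u ≤ Afun s t := by
  constructor
  · rintro ⟨-, -, hW⟩
    exact Bfun_le_Afun_of_forall u fun θ r hr =>
      Bterm_le_Aterm_of_nonneg_on_products hs ht
        (fun x y z hx hy hz => hW _ (isSep_proj_kron3 hx hy hz)) θ hr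
  · intro hBA
    exact ⟨XMat_isHermitian s t u, hnp,
      fun ρ hρ => pairing_nonneg_of_isSep (pairing_proj_kron3_nonneg u hs ht hBA) hρ⟩

end
end

section
/- For every z ∈ ℂ⁴, C(z) = B(z₁,z₂,z₃,z̄₄), where z̄₄ denotes the complex conjugate of z₄. -/
open scoped ComplexOrder Matrix

noncomputable section

/-!
Put `θ = α + β` and use `Re (z₃ e^{iβ}) = Re (z̄₃ e^{-iβ})`: the sum inside `C(z)` becomes
`Re (w₁ e^{iγ}) + Re (w₂ e^{-iβ})` with `w₁ = z₁ e^{iθ} + z₄` and `w₂ = z₂ e^{iθ} + z̄₃`.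
For fixed `θ` the phases `γ` and `β` are still free, so the supremum of this over them is
`|w₁| + |w₂|`, attained at `γ = -arg w₁`, `β = arg w₂`.
-/

section

open Complex

lemma abs_re_mul_exp_ofReal_mul_I_le (w : ℂ) (x : ℝ) : |(w * exp (x * I)).re| ≤ ‖w‖ :=
  calc |(w * exp (x * I)).re| ≤ ‖w * exp (x * I)‖ := abs_re_le_norm _
    _ = ‖w‖ := by rw [norm_mul, norm_exp_ofReal_mul_I, mul_one]

lemma mul_exp_neg_arg_mul_I (w : ℂ) : w * exp (↑(-w.arg) * I) = ‖w‖ := by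
  rw [ofReal_neg, neg_mul, exp_neg, ← div_eq_mul_inv, div_eq_iff (exp_ne_zero _),
    norm_mul_exp_arg_mul_I]

lemma re_mul_exp_ofReal_mul_I_eq_re_star (w : ℂ) (x : ℝ) :
    (w * exp (x * I)).re = (star w * exp (↑(-x) * I)).re := by
  rw [← conj_re, map_mul, ← exp_conj, map_mul, conj_ofReal, conj_I, ofReal_neg, neg_mul, mul_neg,
    star_def]

def bObjective (u : Fin 4 → ℂ) (θ : ℝ) : ℝ :=
  ‖u 0 * exp (θ * I) + star (u 3)‖ + ‖u 1 * exp (θ * I) + star (u 2)‖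

def cObjective (z : Fin 4 → ℂ) (α β γ : ℝ) : ℝ :=
  |(z 0 * exp (↑(α + β + γ) * I)).re + (z 1 * exp (α * I)).re +
    (z 2 * exp (β * I)).re + (z 3 * exp (γ * I)).re|

lemma bObjective_le (u : Fin 4 → ℂ) (θ : ℝ) :
    bObjective u θ ≤ ‖u 0‖ + ‖u 3‖ + (‖u 1‖ + ‖u 2‖) := by
  unfold bObjective
  gcongr <;>
  · refine (norm_add_le _ _).trans ?_
    rw [norm_mul, norm_exp_ofReal_mul_I, mul_one, norm_star]

lemma cObjective_eq (z : Fin 4 → ℂ) (α β γ : ℝ) :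
    cObjective z α β γ =
      |((z 0 * exp (↑(α + β) * I) + z 3) * exp (γ * I)).re +
        ((z 1 * exp (↑(α + β) * I) + star (z 2)) * exp (↑(-β) * I)).re| := by
  have hα : exp (α * I) = exp (↑(α + β) * I) * exp (↑(-β) * I) := by
    rw [← exp_add]; push_cast; ring_nf
  have hαβγ : exp (↑(α + β + γ) * I) = exp (↑(α + β) * I) * exp (γ * I) := by
    rw [← exp_add]; push_cast; ring_nf
  rw [cObjective, re_mul_exp_ofReal_mul_I_eq_re_star (z 2), hα, hαβγ]
  simp only [add_mul, add_re, mul_assoc]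
  ring_nf

variable (z : Fin 4 → ℂ)

lemma bObjective_star_last (θ : ℝ) :
    bObjective ![z 0, z 1, z 2, star (z 3)] θ =
      ‖z 0 * exp (θ * I) + z 3‖ + ‖z 1 * exp (θ * I) + star (z 2)‖ := by
  simp [bObjective]

lemma cObjective_le_bObjective (α β γ : ℝ) :
    cObjective z α β γ ≤ bObjective ![z 0, z 1, z 2, star (z 3)] (α + β) := by
  rw [cObjective_eq, bObjective_star_last]
  refine (abs_add_le _ _).trans (add_le_add ?_ ?_) <;>
    exact abs_re_mul_exp_ofReal_mul_I_le _ _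

lemma exists_cObjective_eq_bObjective (θ : ℝ) :
    ∃ α β γ, cObjective z α β γ = bObjective ![z 0, z 1, z 2, star (z 3)] θ := by
  set w₁ := z 0 * exp (θ * I) + z 3
  set w₂ := z 1 * exp (θ * I) + star (z 2)
  refine ⟨θ - w₂.arg, w₂.arg, -w₁.arg, ?_⟩
  rw [bObjective_star_last, cObjective_eq, sub_add_cancel, mul_exp_neg_arg_mul_I,
    mul_exp_neg_arg_mul_I, ofReal_re, ofReal_re, abs_of_nonneg (by positivity)]

end

/-- `C(z) = B(z₁, z₂, z₃, z̄₄)`. -/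
theorem stmt5 (z : Fin 4 → ℂ) :
    Cfun z = Bfun ![z 0, z 1, z 2, star (z 3)] := by
  set u := ![z 0, z 1, z 2, star (z 3)]
  change ⨆ p : ℝ × ℝ × ℝ, cObjective z p.1 p.2.1 p.2.2 = ⨆ θ, bObjective u θ
  have hB : BddAbove (Set.range (bObjective u)) :=
    ⟨_, Set.forall_mem_range.2 (bObjective_le u)⟩
  have hCB : ∀ p : ℝ × ℝ × ℝ, cObjective z p.1 p.2.1 p.2.2 ≤ ⨆ θ, bObjective u θ :=
    fun ⟨α, β, γ⟩ ↦ (cObjective_le_bObjective z α β γ).trans (le_ciSup hB _)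
  refine le_antisymm (ciSup_le hCB) (ciSup_le fun θ ↦ ?_)
  obtain ⟨α, β, γ, h⟩ := exists_cObjective_eq_bObjective z θ
  exact h ▸ le_ciSup ⟨_, Set.forall_mem_range.2 hCB⟩ (α, β, γ)

end
end

section
/- Let z ∈ ℝ⁴ be nonzero with z₁z₂z₃z₄ ≥ 0. Then C(z) = |z₁| + |z₂| + |z₃| + |z₄|. -/
open scoped ComplexOrder Matrix

noncomputable section

/- Each term is at most `|zᵢ|`, so `C(z) ≤ ∑ |zᵢ|`. For equality take all angles in
`{0, π}`: then the phases are signs `εᵢ = ±1` subject only to `ε₁ = ε₂ε₃ε₄`, i.e. `∏ εᵢ = 1`, and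
`0 ≤ z₁z₂z₃z₄` is exactly what allows such signs to satisfy `εᵢ zᵢ = |zᵢ|` for all `i`
(a zero coordinate absorbs a wrong overall sign). -/

open Real

theorem exists_sign_prod_eq_one_mul_eq_abs {ι : Type*} [Fintype ι] [DecidableEq ι]
    (z : ι → ℝ) (h : 0 ≤ ∏ i, z i) :
    ∃ ε : ι → ℝ, (∀ i, |ε i| = 1) ∧ ∏ i, ε i = 1 ∧ ∀ i, ε i * z i = |z i| := by
  set σ : ι → ℝ := fun i => if 0 ≤ z i then 1 else -1
  have hσ_abs (i : ι) : |σ i| = 1 := by by_cases hi : 0 ≤ z i <;> simp [σ, hi]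
  have hσ_mul (i : ι) : σ i * z i = |z i| := by
    by_cases hi : 0 ≤ z i
    · simp [σ, hi, abs_of_nonneg hi]
    · simp [σ, hi, abs_of_neg (not_le.mp hi)]
  have hprod_abs : |∏ i, σ i| = 1 := by simp only [Finset.abs_prod, hσ_abs, Finset.prod_const_one]
  rcases abs_eq zero_le_one |>.mp hprod_abs with hprod | hprod
  · exact ⟨σ, hσ_abs, hprod, hσ_mul⟩
  have hzero : ∏ i, z i = 0 := by
    have : (∏ i, σ i) * ∏ i, z i = |∏ i, z i| := by
      simp only [← Finset.prod_mul_distrib, hσ_mul, Finset.abs_prod]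
    rw [hprod, abs_of_nonneg h] at this
    linarith
  obtain ⟨j, -, hj⟩ := Finset.prod_eq_zero_iff.mp hzero
  refine ⟨fun i => (if i = j then -1 else 1) * σ i, fun i => ?_, ?_, fun i => ?_⟩
  · by_cases hi : i = j <;> simp [hi, hσ_abs]
  · rw [Finset.prod_mul_distrib, hprod, Fintype.prod_ite_eq']
    norm_num
  · by_cases hi : i = j
    · simp [hi, hj]
    · simp [hi, hσ_mul]

theorem exists_cos_eq_sin_eq_zero {ε : ℝ} (hε : |ε| = 1) : ∃ θ, cos θ = ε ∧ sin θ = 0 := by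
  rcases abs_eq zero_le_one |>.mp hε with rfl | rfl
  · exact ⟨0, cos_zero, sin_zero⟩
  · exact ⟨π, cos_pi, sin_pi⟩

theorem re_ofReal_mul_exp_mul_I (w θ : ℝ) :
    ((w : ℂ) * Complex.exp (θ * Complex.I)).re = w * cos θ := by
  simp [Complex.mul_re, Complex.exp_ofReal_mul_I_re, Complex.exp_ofReal_mul_I_im]

def phaseSum (z : Fin 4 → ℝ) (p : ℝ × ℝ × ℝ) : ℝ :=
  z 0 * cos (p.1 + p.2.1 + p.2.2) + z 1 * cos p.1 + z 2 * cos p.2.1 + z 3 * cos p.2.2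

theorem Cfun_ofReal (z : Fin 4 → ℝ) :
    Cfun (fun i => (z i : ℂ)) = ⨆ p, |phaseSum z p| := by
  simp only [Cfun, re_ofReal_mul_exp_mul_I, phaseSum]

theorem abs_phaseSum_le (z : Fin 4 → ℝ) (p : ℝ × ℝ × ℝ) :
    |phaseSum z p| ≤ |z 0| + |z 1| + |z 2| + |z 3| := by
  have term_le (w θ : ℝ) : |w * cos θ| ≤ |w| := by
    rw [abs_mul]
    exact mul_le_of_le_one_right (abs_nonneg w) (abs_cos_le_one θ)
  unfold phaseSum
  refine (abs_add_le _ _).trans (add_le_add ?_ (term_le _ _))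
  refine (abs_add_le _ _).trans (add_le_add ?_ (term_le _ _))
  exact (abs_add_le _ _).trans (add_le_add (term_le _ _) (term_le _ _))

theorem exists_phaseSum_eq (z : Fin 4 → ℝ) (h : 0 ≤ z 0 * z 1 * z 2 * z 3) :
    ∃ p, phaseSum z p = |z 0| + |z 1| + |z 2| + |z 3| := by
  obtain ⟨ε, hε_abs, hε_prod, hε_mul⟩ :=
    exists_sign_prod_eq_one_mul_eq_abs z (by simpa [Fin.prod_univ_four] using h)
  rw [Fin.prod_univ_four] at hε_prod
  obtain ⟨α, hcα, hsα⟩ := exists_cos_eq_sin_eq_zero (hε_abs 1)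
  obtain ⟨β, hcβ, hsβ⟩ := exists_cos_eq_sin_eq_zero (hε_abs 2)
  obtain ⟨γ, hcγ, hsγ⟩ := exists_cos_eq_sin_eq_zero (hε_abs 3)
  have hε₀ : ε 0 = ε 1 * ε 2 * ε 3 := by
    have hsq : ε 0 * ε 0 = 1 := by rw [← abs_mul_abs_self, hε_abs, one_mul]
    linear_combination ε 1 * ε 2 * ε 3 * hsq - ε 0 * hε_prod
  refine ⟨(α, β, γ), ?_⟩
  simp only [phaseSum, cos_add, sin_add, hcα, hsα, hcβ, hsβ, hcγ, hsγ, ← hε_mul]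
  linear_combination z 0 * hε₀.symm

theorem stmt10_general (z : Fin 4 → ℝ) (h : 0 ≤ z 0 * z 1 * z 2 * z 3) :
    Cfun (fun i => (z i : ℂ)) = |z 0| + |z 1| + |z 2| + |z 3| := by
  have hbdd : BddAbove (Set.range fun p => |phaseSum z p|) :=
    ⟨_, Set.forall_mem_range.mpr (abs_phaseSum_le z)⟩
  obtain ⟨p, hp⟩ := exists_phaseSum_eq z h
  rw [Cfun_ofReal]
  refine le_antisymm (ciSup_le (abs_phaseSum_le z)) ?_
  exact le_ciSup_of_le hbdd p (hp ▸ le_abs_self _)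

/-- if `z ≠ 0` and `z₁z₂z₃z₄ ≥ 0` then
`C(z) = |z₁| + |z₂| + |z₃| + |z₄|`. -/
theorem stmt10 (z : Fin 4 → ℝ) (hz : z ≠ 0) (h : 0 ≤ z 0 * z 1 * z 2 * z 3) :
    Cfun (fun i => (z i : ℂ)) = |z 0| + |z 1| + |z 2| + |z 3| :=
  stmt10_general z h

end
end

section
/- Let z ∈ ℝ⁴ with z₁z₂z₃z₄ < 0 and suppose that 1/|z_i| < Σ_{j≠i} 1/|z_j| for every i ∈ {1,2,3,4}. Then C(z) = √( (z₁z₂−z₃z₄)(z₂z₄−z₁z₃)(z₁z₄−z₂z₃) / (−z₁z₂z₃z₄) ). -/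
open scoped ComplexOrder Matrix

noncomputable section

/-!
Fix `s = α + γ`. For real `z` the sum splits as
`Re ((z₁ e^{is} + z₃) e^{iβ}) + Re ((z₄ e^{is} + z₂) e^{-iα})`, so optimising over `β` and `α`
gives `C(z) = max_s (|z₁ e^{is} + z₃| + |z₄ e^{is} + z₂|)`. In `t = cos s` both squared norms are
affine, with slopes `2 z₁ z₃` and `2 z₂ z₄` of opposite signs, so the sum of their square roots
is concave in `t` and is maximal where the two slopes balance, at `t₀ = critCos (1/z₁) (1/z₂) (1/z₃) (1/z₄)`; the value there is the claimed square root.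
The inequalities on the `|1/zᵢ|` say that they are the sides of a quadrilateral, and this is what
puts `t₀` inside `(-1, 1)`: up to sign, `t₀` is the cosine of an angle of the cyclic quadrilateral
with sides `|1/z₁|, |1/z₃|, |1/z₂|, |1/z₄|`.
-/

open Complex Set

lemma add_le_of_sq_div_add_sq_div_le {x y u v : ℝ} (hu : 0 < u) (hv : 0 < v)
    (h : x ^ 2 / u + y ^ 2 / v ≤ u + v) : x + y ≤ u + v := by
  have hx : 2 * x ≤ x ^ 2 / u + u := by
    rw [div_add' _ _ _ hu.ne', le_div_iff₀ hu]; nlinarith [sq_nonneg (x - u)]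
  have hy : 2 * y ≤ y ^ 2 / v + v := by
    rw [div_add' _ _ _ hv.ne', le_div_iff₀ hv]; nlinarith [sq_nonneg (y - v)]
  linarith

lemma add_le_of_sq_eq_affine {x y p q k P₀ t t₀ : ℝ} (hk : 0 < k) (hP₀ : 0 < P₀)
    (hpq : p * k + q = 0) (hx : x ^ 2 = P₀ + 2 * p * (t - t₀))
    (hy : y ^ 2 = k ^ 2 * P₀ + 2 * q * (t - t₀)) : x + y ≤ (1 + k) * √P₀ := by
  have hU : 0 < √P₀ := Real.sqrt_pos.2 hP₀
  have hPU : P₀ = √P₀ ^ 2 := (Real.sq_sqrt hP₀.le).symm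
  generalize √P₀ = U at hU hPU ⊢
  subst hPU
  rw [add_mul, one_mul]
  refine add_le_of_sq_div_add_sq_div_le hU (mul_pos hk hU) (le_of_eq ?_)
  rw [hx, hy]
  field_simp
  linear_combination (2 * (t - t₀)) * hpq

lemma sq_add_sq_add_two_mul_mul_pos {a c t : ℝ} (ha : a ≠ 0) (ht : |t| < 1) :
    0 < a ^ 2 + c ^ 2 + 2 * a * c * t := by
  have ht' : t ^ 2 < 1 := by nlinarith [sq_abs t, abs_nonneg t]
  nlinarith [sq_nonneg (c + a * t), mul_pos (sq_pos_of_ne_zero ha) (sub_pos.2 ht')]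

lemma abs_re_mul_exp_le_norm (w : ℂ) (θ : ℝ) : |(w * exp (θ * I)).re| ≤ ‖w‖ := by
  simpa [norm_exp_ofReal_mul_I] using abs_re_le_norm (w * exp (θ * I))

lemma re_mul_exp_neg_arg (w : ℂ) : (w * exp (↑(-arg w) * I)).re = ‖w‖ := by
  conv_lhs => rw [← norm_mul_exp_arg_mul_I w]
  rw [mul_assoc, ← exp_add]
  simp

lemma norm_ofReal_mul_exp_add_ofReal_sq (a c s : ℝ) :
    ‖(a : ℂ) * exp (s * I) + c‖ ^ 2 = a ^ 2 + c ^ 2 + 2 * a * c * Real.cos s := by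
  rw [Complex.sq_norm, normSq_apply]
  simp only [add_re, add_im, re_ofReal_mul, im_ofReal_mul, exp_ofReal_mul_I_re,
    exp_ofReal_mul_I_im, ofReal_re, ofReal_im]
  linear_combination a ^ 2 * Real.sin_sq_add_cos_sq s

lemma re_four_phases_eq (a b c d α β γ : ℝ) :
    ((a : ℂ) * exp (↑(α + β + γ) * I)).re + ((b : ℂ) * exp (α * I)).re +
        ((c : ℂ) * exp (β * I)).re + ((d : ℂ) * exp (γ * I)).re =
      (((a : ℂ) * exp (↑(α + γ) * I) + c) * exp (β * I)).re +
        (((d : ℂ) * exp (↑(α + γ) * I) + b) * exp (↑(-α) * I)).re := by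
  have h₁ : ((a : ℂ) * exp (↑(α + γ) * I) + c) * exp (β * I) =
      a * exp (↑(α + β + γ) * I) + c * exp (β * I) := by
    rw [add_mul, mul_assoc, ← exp_add]; push_cast; ring_nf
  have h₂ : ((d : ℂ) * exp (↑(α + γ) * I) + b) * exp (↑(-α) * I) =
      d * exp (γ * I) + b * exp (↑(-α) * I) := by
    rw [add_mul, mul_assoc, ← exp_add]; push_cast; ring_nf
  simp only [h₁, h₂, add_re, re_ofReal_mul, exp_ofReal_mul_I_re, Real.cos_neg]
  ring

lemma Cfun_ofReal_eq {z : Fin 4 → ℝ} {m : ℝ}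
    (hm : IsGreatest (range fun s : ℝ =>
      ‖(z 0 : ℂ) * exp (s * I) + z 2‖ + ‖(z 3 : ℂ) * exp (s * I) + z 1‖) m) :
    Cfun (fun j => (z j : ℂ)) = m := by
  refine IsGreatest.csSup_eq ⟨?_, ?_⟩
  · obtain ⟨s, hs⟩ := hm.1
    set u : ℂ := (z 0 : ℂ) * exp (s * I) + z 2
    set v : ℂ := (z 3 : ℂ) * exp (s * I) + z 1
    refine ⟨(arg v, -arg u, s - arg v), ?_⟩
    dsimp only
    rw [re_four_phases_eq, show arg v + (s - arg v) = s by ring, re_mul_exp_neg_arg,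
      re_mul_exp_neg_arg, abs_of_nonneg (by positivity)]
    exact hs
  · rintro _ ⟨⟨α, β, γ⟩, rfl⟩
    dsimp only
    rw [re_four_phases_eq]
    exact (abs_add_le _ _).trans <| (add_le_add (abs_re_mul_exp_le_norm _ _)
      (abs_re_mul_exp_le_norm _ _)).trans (hm.2 ⟨α + γ, rfl⟩)

def critCos (x₀ x₁ x₂ x₃ : ℝ) : ℝ :=
  (x₀ ^ 2 + x₂ ^ 2 - x₁ ^ 2 - x₃ ^ 2) / (2 * (x₁ * x₃ - x₀ * x₂))

lemma abs_critCos_lt_one (x : Fin 4 → ℝ) (hx : x 0 * x 1 * x 2 * x 3 < 0)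
    (h : ∀ i, |x i| < ∑ j ∈ Finset.univ.erase i, |x j|) :
    |critCos (x 0) (x 1) (x 2) (x 3)| < 1 := by
  have h₂ : ∀ i, 2 * |x i| < |x 0| + |x 1| + |x 2| + |x 3| := fun i => by
    have := h i
    rw [Finset.sum_erase_eq_sub (Finset.mem_univ i), Fin.sum_univ_four] at this
    linarith
  have e₀ := h₂ 0; have e₁ := h₂ 1; have e₂ := h₂ 2; have e₃ := h₂ 3
  have hopp : (x 0 * x 2) * (x 1 * x 3) < 0 := by linarith
  have habs : |x 1 * x 3 - x 0 * x 2| = |x 0| * |x 2| + |x 1| * |x 3| := by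
    rw [← abs_mul, ← abs_mul]
    rcases mul_neg_iff.1 hopp with ⟨hp, hq⟩ | ⟨hp, hq⟩
    · rw [abs_of_neg (by linarith), abs_of_pos hp, abs_of_neg hq]; ring
    · rw [abs_of_pos (by linarith), abs_of_neg hp, abs_of_pos hq]; ring
  have hpos : 0 < |x 0| * |x 2| + |x 1| * |x 3| := by
    rw [← abs_mul]
    exact add_pos_of_pos_of_nonneg (abs_pos.2 (left_ne_zero_of_mul hopp.ne)) (by positivity)
  unfold critCos
  rw [abs_div, abs_mul, abs_two, habs, div_lt_one (by positivity), ← sq_abs (x 0),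
    ← sq_abs (x 1), ← sq_abs (x 2), ← sq_abs (x 3), abs_lt]
  constructor
  · nlinarith [mul_pos (by linarith : 0 < |x 0| + |x 2| - |x 1| + |x 3|)
      (by linarith : 0 < |x 0| + |x 2| + |x 1| - |x 3|)]
  · nlinarith [mul_pos (by linarith : 0 < |x 1| + |x 3| - |x 0| + |x 2|)
      (by linarith : 0 < |x 1| + |x 3| + |x 0| - |x 2|)]

lemma isGreatest_norm_add_norm {a b c d : ℝ} (h : a * b * c * d < 0)
    (ht : |critCos a⁻¹ b⁻¹ c⁻¹ d⁻¹| < 1) :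
    IsGreatest (range fun s : ℝ => ‖(a : ℂ) * exp (s * I) + c‖ + ‖(d : ℂ) * exp (s * I) + b‖)
      √((a * b - c * d) * (b * d - a * c) * (a * d - b * c) / (-(a * b * c * d))) := by
  have ha : a ≠ 0 := by rintro rfl; simp at h
  have hb : b ≠ 0 := by rintro rfl; simp at h
  have hc : c ≠ 0 := by rintro rfl; simp at h
  have hd : d ≠ 0 := by rintro rfl; simp at h
  have hopp : (a * c) * (b * d) < 0 := by linarith
  have hD : a * c - b * d ≠ 0 := by
    intro heq
    rw [show a * c = b * d by linarith] at hopp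
    nlinarith [sq_nonneg (b * d)]
  set t₀ := critCos a⁻¹ b⁻¹ c⁻¹ d⁻¹ with ht₀
  set k := -(b * d) / (a * c)
  set P₀ := a ^ 2 + c ^ 2 + 2 * a * c * t₀ with hP₀
  have hk : 0 < k := by
    rcases mul_neg_iff.1 hopp with ⟨h₁, h₂⟩ | ⟨h₁, h₂⟩
    · exact div_pos (by linarith) h₁
    · exact div_pos_of_neg_of_neg (by linarith) h₁
  have hP₀pos : 0 < P₀ := sq_add_sq_add_two_mul_mul_pos ha ht
  have hQ₀ : b ^ 2 + d ^ 2 + 2 * b * d * t₀ = k ^ 2 * P₀ := by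
    simp only [ht₀, hP₀, k, critCos]; field_simp; ring
  have hM : (a * b - c * d) * (b * d - a * c) * (a * d - b * c) / (-(a * b * c * d)) =
      (1 + k) ^ 2 * P₀ := by
    simp only [ht₀, hP₀, k, critCos]; field_simp; ring
  rw [hM, Real.sqrt_mul (sq_nonneg _), Real.sqrt_sq (by linarith)]
  constructor
  · refine ⟨Real.arccos t₀, ?_⟩
    have hcos : Real.cos (Real.arccos t₀) = t₀ :=
      Real.cos_arccos (by linarith [neg_abs_le t₀]) (by linarith [le_abs_self t₀])
    dsimp only
    rw [← Real.sqrt_sq (norm_nonneg ((a : ℂ) * _ + _)),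
      ← Real.sqrt_sq (norm_nonneg ((d : ℂ) * _ + _)),
      norm_ofReal_mul_exp_add_ofReal_sq, norm_ofReal_mul_exp_add_ofReal_sq, hcos,
      show d ^ 2 + b ^ 2 + 2 * d * b * t₀ = k ^ 2 * P₀ by linear_combination hQ₀,
      Real.sqrt_mul (sq_nonneg _), Real.sqrt_sq hk.le]
    ring
  · rintro _ ⟨s, rfl⟩
    refine add_le_of_sq_eq_affine (p := a * c) (q := b * d) (t := Real.cos s) (t₀ := t₀)
      hk hP₀pos ?_ ?_ ?_
    · simp only [k]; field_simp; ring
    · rw [norm_ofReal_mul_exp_add_ofReal_sq]; ring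
    · rw [norm_ofReal_mul_exp_add_ofReal_sq]; linear_combination hQ₀

/-- if `z₁z₂z₃z₄ < 0` and `1/|zᵢ| < Σ_{j≠i} 1/|z_j|` for every `i`,
then `C(z) = √((z₁z₂−z₃z₄)(z₂z₄−z₁z₃)(z₁z₄−z₂z₃)/(−z₁z₂z₃z₄))`. -/
theorem stmt12 (z : Fin 4 → ℝ) (h : z 0 * z 1 * z 2 * z 3 < 0)
    (h0 : ∀ i : Fin 4, (|z i|)⁻¹ < ∑ j ∈ Finset.univ.erase i, (|z j|)⁻¹) :
    Cfun (fun j => (z j : ℂ)) =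
      Real.sqrt ((z 0 * z 1 - z 2 * z 3) * (z 1 * z 3 - z 0 * z 2) *
        (z 0 * z 3 - z 1 * z 2) / (-(z 0 * z 1 * z 2 * z 3))) := by
  have hinv : (z 0)⁻¹ * (z 1)⁻¹ * (z 2)⁻¹ * (z 3)⁻¹ < 0 := by
    simpa only [mul_inv] using inv_lt_zero.2 h
  exact Cfun_ofReal_eq <| isGreatest_norm_add_norm h <|
    abs_critCos_lt_one (fun i => (z i)⁻¹) hinv (by simpa only [abs_inv] using h0)

end
end
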